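/- arXiv:2401.12849 — 2 statements merged into one kernel-verified Lean document; each statement's English description precedes it below -/
import Mathlib

section
/- (Optimal binary Bellman equation.) For every state s and every action a, the optimal binary action-value function satisfies b^*(s, a) = i(s) + (1 − i(s)) · min_{a' ∈ A} b^*(s', a'), where s' = F(s, a); in other words, b^* is a fixed point of the binary Bellman operator T. -/
/-!
A policy avoids `G` from `x` exactly when some set containing `x` and disjoint from `G` is
closed under the policy's transitions. Hence from a safe state `x` one can first play any
action `a` whose successor is safe under some policy `π` and then follow `π`: the set
`{x} ∪ X`, with `X` a safe invariant set of `π` at `F x a`, is invariant for the policy that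
plays `a` at `x` and agrees with `π` elsewhere. This gives `v^*(x) = min_a b^*(x, a)`, and
`b^*(s, a) = i(s) + (1 - i(s)) v^*(F(s, a))` holds policy by policy.
-/

open scoped Classical

variable {S A : Type*}

/-- `reach F π t s` : the `t`-step reachable set from state `s` under policy `π`
(a policy assigns to each state the set of allowed actions).
`F_0^π(s) = {s}` and `F_{t+1}^π(s) = { F(s', a) : s' ∈ F_t^π(s), a ∈ π(s') }`. -/
def reach (F : S → A → S) (π : S → Set A) : ℕ → S → Set S
  | 0, s => {s}
  | t + 1, s => {s'' | ∃ s' ∈ reach F π t s, ∃ a ∈ π s', s'' = F s' a}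

/-- `reachSA F π t s a` : the `t`-step reachable set from the state-action pair `(s, a)`:
`F_0^π(s,a) = {s}`, `F_1^π(s,a) = {F(s,a)}`, and for `t ≥ 1`,
`F_{t+1}^π(s,a) = { F(s', a') : s' ∈ F_t^π(s,a), a' ∈ π(s') }`. -/
def reachSA (F : S → A → S) (π : S → Set A) : ℕ → S → A → Set S
  | 0, s, _ => {s}
  | 1, s, a => {F s a}
  | t + 2, s, a => {s'' | ∃ s' ∈ reachSA F π (t + 1) s a, ∃ a' ∈ π s', s'' = F s' a'}

/-- The insecurity function: `i(s) = 1` if `s ∈ G`, else `0`. -/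
noncomputable def insec (G : Set S) (s : S) : ℕ := if s ∈ G then 1 else 0

/-- The binary safety value function of a policy:
`v^π(s) = 1` iff some reachable state from `s` lies in `G`. -/
noncomputable def vPol (F : S → A → S) (G : Set S) (π : S → Set A) (s : S) : ℕ :=
  if ∃ t : ℕ, ∃ s' ∈ reach F π t s, s' ∈ G then 1 else 0

/-- The binary safety action-value function of a policy:
`b^π(s,a) = 1` iff some reachable state from `(s,a)` lies in `G`. -/
noncomputable def bPol (F : S → A → S) (G : Set S) (π : S → Set A) (s : S) (a : A) : ℕ :=
  if ∃ t : ℕ, ∃ s' ∈ reachSA F π t s a, s' ∈ G then 1 else 0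

/-- The optimal binary value function `v^*(s) = inf_π v^π(s)`,
the infimum over all (nonempty-support) policies. -/
noncomputable def vStar (F : S → A → S) (G : Set S) (s : S) : ℕ :=
  ⨅ π : {π : S → Set A // ∀ x, (π x).Nonempty}, vPol F G π.1 s

/-- The optimal binary action-value function `b^*(s,a) = inf_π b^π(s,a)`. -/
noncomputable def bStar (F : S → A → S) (G : Set S) (s : S) (a : A) : ℕ :=
  ⨅ π : {π : S → Set A // ∀ x, (π x).Nonempty}, bPol F G π.1 s a

/-- The binary Bellman operator:
`(T b)(s,a) = i(s) + (1 − i(s)) · min_{a'} b(F(s,a), a')`. -/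
noncomputable def Tb (F : S → A → S) (G : Set S) (b : S → A → ℕ) : S → A → ℕ :=
  fun s a => insec G s + (1 - insec G s) * ⨅ a' : A, b (F s a) a'

open Set

namespace Nat

lemma iInf_eq_zero_iff {ι : Sort*} [Nonempty ι] {f : ι → ℕ} :
    ⨅ i, f i = 0 ↔ ∃ i, f i = 0 := by
  simp [iInf, Nat.sInf_eq_zero, (range_nonempty f).ne_empty]

end Nat

section Reachability

variable (F : S → A → S) (π : S → Set A)

def IsPolicyInvariant (X : Set S) : Prop := ∀ x ∈ X, ∀ a ∈ π x, F x a ∈ X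

variable {F π}

lemma IsPolicyInvariant.reach_subset {X : Set S} (hX : IsPolicyInvariant F π X) {x : S}
    (hx : x ∈ X) : ∀ t, reach F π t x ⊆ X
  | 0 => singleton_subset_iff.2 hx
  | t + 1 => by
    rintro _ ⟨y, hy, a, ha, rfl⟩
    exact hX y (hX.reach_subset hx t hy) a ha

lemma isPolicyInvariant_iUnion_reach (x : S) :
    IsPolicyInvariant F π (⋃ t, reach F π t x) := by
  rintro y hy a ha
  obtain ⟨t, hyt⟩ := mem_iUnion.1 hy
  exact mem_iUnion.2 ⟨t + 1, y, hyt, a, ha, rfl⟩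

lemma IsPolicyInvariant.insert_update {X : Set S} (hX : IsPolicyInvariant F π X) {x : S}
    {a : A} (hxa : F x a ∈ X) : IsPolicyInvariant F (Function.update π x {a}) (insert x X) := by
  rintro y hy b hb
  by_cases hyx : y = x
  · subst hyx
    rw [Function.update_self, mem_singleton_iff] at hb
    exact mem_insert_of_mem _ (hb ▸ hxa)
  · rw [Function.update_of_ne hyx] at hb
    exact mem_insert_of_mem _ (hX y ((mem_insert_iff.1 hy).resolve_left hyx) b hb)

lemma reachSA_add_one (s : S) (a : A) (t : ℕ) :
    reachSA F π (t + 1) s a = reach F π t (F s a) := by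
  induction t with
  | zero => rfl
  | succ t ih => simp only [reachSA, ih, reach]

end Reachability

section Values

variable {F : S → A → S} {G : Set S} {π : S → Set A}

lemma vPol_le_one (x : S) : vPol F G π x ≤ 1 := by
  unfold vPol; split_ifs <;> simp

lemma vPol_eq_zero_iff_exists_isPolicyInvariant {x : S} :
    vPol F G π x = 0 ↔ ∃ X, IsPolicyInvariant F π X ∧ x ∈ X ∧ Disjoint X G := by
  simp only [vPol, ite_eq_right_iff, one_ne_zero, imp_false, not_exists, not_and]
  constructor
  · intro h
    refine ⟨⋃ t, reach F π t x, isPolicyInvariant_iUnion_reach x, mem_iUnion.2 ⟨0, rfl⟩,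
      disjoint_iUnion_left.2 fun t => disjoint_left.2 fun y hy => h t y hy⟩
  · rintro ⟨X, hX, hx, hXG⟩ t y hy
    exact disjoint_left.1 hXG (hX.reach_subset hx t hy)

lemma bPol_eq (s : S) (a : A) :
    bPol F G π s a = insec G s + (1 - insec G s) * vPol F G π (F s a) := by
  have hsplit : (∃ t, ∃ y ∈ reachSA F π t s a, y ∈ G) ↔
      s ∈ G ∨ ∃ t, ∃ y ∈ reach F π t (F s a), y ∈ G := by
    constructor
    · rintro ⟨_ | t, y, hy, hyG⟩
      · exact Or.inl (mem_singleton_iff.1 hy ▸ hyG)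
      · exact Or.inr ⟨t, y, reachSA_add_one s a t ▸ hy, hyG⟩
    · rintro (hs | ⟨t, y, hy, hyG⟩)
      · exact ⟨0, s, rfl, hs⟩
      · exact ⟨t + 1, y, (reachSA_add_one s a t).symm ▸ hy, hyG⟩
  unfold bPol vPol insec
  rw [if_congr hsplit rfl rfl]
  split_ifs <;> simp_all

variable [Nonempty A]

instance : Nonempty {π : S → Set A // ∀ x, (π x).Nonempty} :=
  ⟨⟨fun _ => univ, fun _ => univ_nonempty⟩⟩

lemma vStar_le_one (x : S) : vStar F G x ≤ 1 :=
  (ciInf_le (OrderBot.bddBelow _) (Classical.arbitrary _)).trans (vPol_le_one x)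

lemma vStar_eq_zero_iff {x : S} : vStar F G x = 0 ↔ x ∉ G ∧ ∃ a, vStar F G (F x a) = 0 := by
  simp only [vStar, Nat.iInf_eq_zero_iff, vPol_eq_zero_iff_exists_isPolicyInvariant,
    Subtype.exists]
  constructor
  · rintro ⟨π, hπ, X, hX, hx, hXG⟩
    obtain ⟨a, ha⟩ := hπ x
    exact ⟨disjoint_left.1 hXG hx, a, π, hπ, X, hX, hX x hx a ha, hXG⟩
  · rintro ⟨hxG, a, π, hπ, X, hX, hxa, hXG⟩
    refine ⟨Function.update π x {a}, fun y => ?_, insert x X, hX.insert_update hxa,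
      mem_insert x X, disjoint_insert_left.2 ⟨hxG, hXG⟩⟩
    by_cases hyx : y = x
    · simp [hyx]
    · simpa [Function.update_of_ne hyx] using hπ y

lemma bStar_eq (s : S) (a : A) :
    bStar F G s a = insec G s + (1 - insec G s) * vStar F G (F s a) := by
  simp only [bStar, bPol_eq, vStar]
  by_cases hs : s ∈ G <;> simp [insec, hs]

lemma vStar_eq_iInf_bStar (x : S) : vStar F G x = ⨅ a, bStar F G x a := by
  have hb : ∀ a, bStar F G x a = if x ∈ G then 1 else vStar F G (F x a) := fun a => by
    by_cases hx : x ∈ G <;> simp [bStar_eq, insec, hx]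
  have hinf_le : ⨅ a, bStar F G x a ≤ 1 := by
    refine (ciInf_le (OrderBot.bddBelow _) (Classical.arbitrary A)).trans ?_
    rw [hb]; split_ifs
    exacts [le_rfl, vStar_le_one _]
  have hzero : vStar F G x = 0 ↔ ⨅ a, bStar F G x a = 0 := by
    rw [vStar_eq_zero_iff, Nat.iInf_eq_zero_iff]
    by_cases hx : x ∈ G <;> simp [hb, hx]
  have := vStar_le_one (F := F) (G := G) x
  omega

end Values

theorem optimal_binary_bellman_general [Nonempty A] (F : S → A → S) (G : Set S) :
    (∀ (s : S) (a : A),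
      bStar F G s a = insec G s + (1 - insec G s) * ⨅ a' : A, bStar F G (F s a) a') ∧
    Tb F G (bStar F G) = bStar F G := by
  have bellman : ∀ s a,
      bStar F G s a = insec G s + (1 - insec G s) * ⨅ a' : A, bStar F G (F s a) a' :=
    fun s a => by rw [bStar_eq, vStar_eq_iInf_bStar]
  exact ⟨bellman, funext₂ fun s a => (bellman s a).symm⟩

/-- Optimal binary Bellman equation:
`b^*(s, a) = i(s) + (1 − i(s)) · min_{a'} b^*(F(s, a), a')`;
in other words, `b^*` is a fixed point of the binary Bellman operator `T`. -/
theorem optimal_binary_bellman [Fintype A] [Nonempty A] (F : S → A → S) (G : Set S) :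
    (∀ (s : S) (a : A),
      bStar F G s a = insec G s + (1 - insec G s) * ⨅ a' : A, bStar F G (F s a) a') ∧
    Tb F G (bStar F G) = bStar F G :=
  optimal_binary_bellman_general F G
end

section
/- (Corollary 1: maximality of safe sets of fixed points.) Let X ⊆ S be a set such that there exist a state s₀ ∉ X and a G-avoiding path from s₀ whose final state lies in X. Then X is not the associated safe set of any fixed point of the binary Bellman operator T; that is, for every fixed point b̃ of T, X ≠ { s ∈ S : min_{a ∈ A} b̃(s, a) = 0 }. -/
/-! Outside `G` a fixed point of `T` satisfies `b(s, a) = min_{a'} b(F(s, a), a')`, so its safe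
set contains every non-failure predecessor of a safe state. Walking the `G`-avoiding path
backwards from `s_T ∈ X` then forces `s₀ ∈ X`. -/

open scoped Classical

variable {S A : Type*}

def safeSet (b : S → A → ℕ) : Set S := {s | (⨅ a : A, b s a) = 0}

theorem Tb_apply_of_notMem {F : S → A → S} {G : Set S} {s : S} (hs : s ∉ G)
    (b : S → A → ℕ) (a : A) : Tb F G b s a = ⨅ a' : A, b (F s a) a' := by
  simp [Tb, insec, hs]

theorem mem_safeSet_of_step {F : S → A → S} {G : Set S} {b : S → A → ℕ}
    (hfix : Tb F G b = b) {s : S} (hs : s ∉ G) {a : A} (hsa : F s a ∈ safeSet b) :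
    s ∈ safeSet b := by
  have hba : b s a = 0 := by
    rw [← hfix, Tb_apply_of_notMem hs]
    exact hsa
  exact Nat.eq_zero_of_le_zero (hba ▸ ciInf_le (OrderBot.bddBelow _) a)

theorem mem_of_path_of_backward_closed {F : S → A → S} {G : Set S} {X : Set S}
    (hX : ∀ s a, s ∉ G → F s a ∈ X → s ∈ X) {T : ℕ} {s : ℕ → S} {act : ℕ → A}
    (hstep : ∀ k < T, s (k + 1) = F (s k) (act k)) (havoid : ∀ k < T, s k ∉ G)
    (hT : s T ∈ X) : s 0 ∈ X :=
  Nat.decreasingInduction (motive := fun k _ => s k ∈ X)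
    (fun k hk hnext => hX _ (act k) (havoid k hk) (hstep k hk ▸ hnext)) hT T.zero_le

theorem not_safe_set_of_reachable_general
    (F : S → A → S) (G : Set S) (X : Set S)
    (hreach : ∃ (T : ℕ) (s : ℕ → S) (act : ℕ → A),
      s 0 ∉ X ∧ (∀ k < T, s (k + 1) = F (s k) (act k)) ∧
      (∀ k < T, s k ∉ G) ∧ s T ∈ X)
    (b : S → A → ℕ) (hfix : Tb F G b = b) :
    X ≠ {s : S | (⨅ a : A, b s a) = 0} := by
  rintro rfl
  obtain ⟨T, s, act, h0, hstep, havoid, hT⟩ := hreach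
  have hclosed : ∀ s a, s ∉ G → F s a ∈ safeSet b → s ∈ safeSet b :=
    fun _ _ hs => mem_safeSet_of_step hfix hs
  exact h0 (mem_of_path_of_backward_closed hclosed hstep havoid hT)

/-- Corollary 1, maximality: if some `G`-avoiding path starts at a
state `s₀ ∉ X` and ends in `X`, then `X` is not the associated safe set of any
fixed point of the binary Bellman operator `T`. -/
theorem not_safe_set_of_reachable [Fintype A] [Nonempty A]
    (F : S → A → S) (G : Set S) (X : Set S)
    (hreach : ∃ (T : ℕ) (s : ℕ → S) (act : ℕ → A),
      s 0 ∉ X ∧ (∀ k < T, s (k + 1) = F (s k) (act k)) ∧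
      (∀ k < T, s k ∉ G) ∧ s T ∈ X)
    (b : S → A → ℕ) (hb : ∀ s a, b s a = 0 ∨ b s a = 1) (hfix : Tb F G b = b) :
    X ≠ {s : S | (⨅ a : A, b s a) = 0} :=
  not_safe_set_of_reachable_general F G X hreach b hfix
end
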